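/- The number of equivalence classes of arrays A[1..n] of distinct values under the equivalence 'giving the same answer to every range minimum query RMQ(i,j)' equals the n-th Catalan number C_n = (1/(n+1))·binomial(2n,n). -/

import Mathlib

inductive BT where
  | leaf : BT
  | node : BT → BT → BT
deriving DecidableEq

namespace BT

/-- Number of nodes. -/
def size : BT → ℕ
  | leaf => 0
  | node l r => l.size + r.size + 1

/-- Inorder list of node positions (paths from the root; `false` = left step). -/
def inList : BT → List (List Bool)
  | leaf => []
  | node l r => (l.inList).map (List.cons false) ++ [] :: (r.inList).map (List.cons true)

/-- Preorder list of node positions. -/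
def preList : BT → List (List Bool)
  | leaf => []
  | node l r => [] :: ((l.preList).map (List.cons false) ++ (r.preList).map (List.cons true))

/-- Subtree rooted at a given position, if the position is valid. -/
def subtree? : BT → List Bool → Option BT
  | t, [] => some t
  | leaf, _ :: _ => none
  | node l r, b :: p => if b then r.subtree? p else l.subtree? p

/-- Size of the left spine (maximal path following left children, top node included). -/
def Lspine : BT → ℕ
  | leaf => 0
  | node l _ => l.Lspine + 1

/-- Size of the right spine. -/
def Rspine : BT → ℕ
  | leaf => 0
  | node _ r => r.Rspine + 1

/-- Size of the left inner spine of the root: right spine of the left child. -/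
def lv : BT → ℕ
  | leaf => 0
  | node l _ => l.Rspine

/-- Size of the right inner spine of the root: left spine of the right child. -/
def rv : BT → ℕ
  | leaf => 0
  | node _ r => r.Lspine

/-- Sum of `f` over all (sub)trees rooted at nodes of the tree. -/
def sumNodes (f : BT → ℕ) : BT → ℕ
  | leaf => 0
  | node l r => f (node l r) + sumNodes f l + sumNodes f r

/-- Number of leaf nodes (nodes with no children). -/
def leaves : BT → ℕ
  | leaf => 0
  | node leaf leaf => 1
  | node l r => leaves l + leaves r

end BT

/-- Longest common prefix of two paths: the LCA of two positions in a binary tree. -/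
def lcp : List Bool → List Bool → List Bool
  | a :: p, b :: q => if a = b then a :: lcp p q else []
  | _, _ => []

/-- Index of the minimum element of a list (0 if empty). -/
def minIdx {α : Type*} [LinearOrder α] (l : List α) : ℕ :=
  match l.argmin id with
  | none => 0
  | some a => l.idxOf a

/-- Cartesian tree construction with fuel. -/
def cartesianAux {α : Type*} [LinearOrder α] : ℕ → List α → BT
  | 0, _ => .leaf
  | _ + 1, [] => .leaf
  | n + 1, l@(_ :: _) =>
      .node (cartesianAux n (l.take (minIdx l))) (cartesianAux n (l.drop (minIdx l + 1)))

/-- The Cartesian tree of a list: root at the position of the minimum,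
recursively built on the prefix before and the suffix after the minimum. -/
def cartesian {α : Type*} [LinearOrder α] (l : List α) : BT :=
  cartesianAux l.length l

/-- `k` is the position of the minimum of `A` on the range `[i, j]`. -/
def isArgmin {α : Type*} [LinearOrder α] {n : ℕ} (A : Fin n → α) (i j k : Fin n) : Prop :=
  i ≤ k ∧ k ≤ j ∧ ∀ m, i ≤ m → m ≤ j → A k ≤ A m

/-- `k` is the position of the second smallest element of `A` on the range `[i, j]`. -/
def isSecondMin {α : Type*} [LinearOrder α] {n : ℕ} (A : Fin n → α) (i j k : Fin n) : Prop :=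
  i ≤ k ∧ k ≤ j ∧
    ∃ m, isArgmin A i j m ∧ k ≠ m ∧ ∀ l, i ≤ l → l ≤ j → l ≠ m → A k ≤ A l

/-- The node with inorder number `i` in `t` has a left child. -/
def hasLeftChildAt (t : BT) (i : ℕ) : Prop :=
  ∃ (p : List Bool) (ll lr r : BT),
    t.inList[i]? = some p ∧ t.subtree? p = some (.node (.node ll lr) r)

/-!
Cut an array at the position of its minimum and recurse on both sides. The resulting Cartesian
tree determines every range-minimum answer, since a query either lies on one side of the cut or
is answered by the cut itself. Conversely the tree is recovered from the answers, its root being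
the answer to the full query, and every shape arises, e.g. from the preorder numbering of its
nodes. So the classes correspond to the binary trees with `n` nodes, counted by `catalan n`.
-/

namespace BinaryTree

variable {α β γ : Type*}

/-- The answer to the query `[i, j]` on an array whose Cartesian tree is `t`, with the nodes of
`t` laid out in inorder on the positions `o, o + 1, …`. -/
def rmq : BinaryTree β → ℕ → ℕ → ℕ → ℕ
  | nil, _, i, _ => i
  | node _ l r, o, i, j =>
    if j < o + l.numNodes then l.rmq o i j
    else if o + l.numNodes < i then r.rmq (o + l.numNodes + 1) i j
    else o + l.numNodes

theorem rmq_mem_Icc (t : BinaryTree β) (o : ℕ) {i j : ℕ} (h : i ≤ j) :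
    t.rmq o i j ∈ Set.Icc i j := by
  induction t generalizing o with
  | nil => exact ⟨le_rfl, h⟩
  | node _ l r ihl ihr =>
    rw [rmq]
    split_ifs
    · exact ihl o
    · exact ihr _
    · rw [Set.mem_Icc]; omega

theorem eq_of_rmq_eq {t₁ t₂ : BinaryTree Unit} (o : ℕ) (hn : t₁.numNodes = t₂.numNodes)
    (h : ∀ i j, o ≤ i → i ≤ j → j < o + t₁.numNodes → t₁.rmq o i j = t₂.rmq o i j) :
    t₁ = t₂ := by
  induction t₁ generalizing o t₂ with
  | nil => cases t₂ <;> simp_all [numNodes]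
  | node _ l₁ r₁ ihl ihr =>
    cases t₂ with
    | nil => simp [numNodes] at hn
    | node _ l₂ r₂ =>
      simp only [numNodes] at hn h
      have hroot : l₁.numNodes = l₂.numNodes := by
        have := h o (o + l₁.numNodes + r₁.numNodes) le_rfl (by omega) (by omega)
        simp only [rmq] at this
        split_ifs at this <;> omega
      obtain rfl := ihl (t₂ := l₂) o hroot fun i j hi hij hj => by
        simpa [rmq, hj, hroot ▸ hj] using h i j hi hij (by omega)
      obtain rfl := ihr (t₂ := r₂) (o + l₁.numNodes + 1) (by omega) fun i j hi hij hj => by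
        have hj' : ¬j < o + l₁.numNodes := by omega
        have hi' : o + l₁.numNodes < i := by omega
        simpa [rmq, hj', hi', hroot] using h i j (by omega) hij (by omega)
      rfl

/-- `t` is a Cartesian tree of `A` on the positions `o, o + 1, …, o + t.numNodes - 1`, its nodes
laid out in inorder. -/
def IsCartesian [Preorder α] (A : ℕ → α) : ℕ → BinaryTree β → Prop
  | _, nil => True
  | o, node _ l r =>
    (∀ x, o ≤ x → x < o + l.numNodes + r.numNodes + 1 → A (o + l.numNodes) ≤ A x) ∧
      IsCartesian A o l ∧ IsCartesian A (o + l.numNodes + 1) r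

theorem IsCartesian.of_le_imp [Preorder α] [Preorder γ] {A : ℕ → α} {B : ℕ → γ} {o : ℕ}
    {t : BinaryTree β} (h : IsCartesian A o t)
    (hAB : ∀ x y, o ≤ x → x < o + t.numNodes → o ≤ y → y < o + t.numNodes →
      A x ≤ A y → B x ≤ B y) :
    IsCartesian B o t := by
  induction t generalizing o with
  | nil => trivial
  | node _ l r ihl ihr =>
    obtain ⟨hroot, hl, hr⟩ := h
    simp only [numNodes] at hAB
    refine ⟨fun x hx₁ hx₂ => hAB _ _ (by omega) (by omega) hx₁ (by omega) (hroot x hx₁ hx₂),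
      ihl hl fun x y hx₁ hx₂ hy₁ hy₂ => hAB x y hx₁ (by omega) hy₁ (by omega),
      ihr hr fun x y hx₁ hx₂ hy₁ hy₂ => hAB x y (by omega) (by omega) (by omega) (by omega)⟩

theorem IsCartesian.rmq_le [Preorder α] {A : ℕ → α} {o : ℕ} {t : BinaryTree β}
    (h : IsCartesian A o t) {i j x : ℕ} (hi : o ≤ i) (hix : i ≤ x) (hxj : x ≤ j)
    (hj : j < o + t.numNodes) :
    A (t.rmq o i j) ≤ A x := by
  induction t generalizing o with
  | nil => simp only [numNodes] at hj; omega
  | node _ l r ihl ihr =>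
    obtain ⟨hroot, hl, hr⟩ := h
    simp only [numNodes] at hj
    rw [rmq]
    split_ifs
    · exact ihl hl hi (by omega)
    · exact ihr hr (by omega) (by omega)
    · exact hroot x (by omega) (by omega)

theorem exists_isCartesian [LinearOrder α] (A : ℕ → α) (o m : ℕ) :
    ∃ t : BinaryTree Unit, t.numNodes = m ∧ IsCartesian A o t := by
  induction m using Nat.strong_induction_on generalizing o with
  | _ m ih =>
  rcases Nat.eq_zero_or_pos m with rfl | hm
  · exact ⟨nil, rfl, trivial⟩
  obtain ⟨k, hk, hmin⟩ :=
    (Finset.Ico o (o + m)).exists_min_image A (Finset.nonempty_Ico.mpr (by omega))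
  rw [Finset.mem_Ico] at hk
  obtain ⟨l, hl, hlc⟩ := ih (k - o) (by omega) o
  obtain ⟨r, hr, hrc⟩ := ih (o + m - k - 1) (by omega) (k + 1)
  have hroot : o + l.numNodes = k := by omega
  refine ⟨node () l r, by simp only [numNodes]; omega, fun x hx₁ hx₂ => ?_, hlc, ?_⟩
  · rw [hroot]
    exact hmin x (Finset.mem_Ico.mpr ⟨hx₁, by omega⟩)
  · rwa [hroot]

/-- Numbers the nodes of `t` in preorder starting from `c`, as an array on the positions
`o, o + 1, …` in inorder. -/
def preorderLabel : BinaryTree β → ℕ → ℕ → ℕ → ℕ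
  | nil, _, _, _ => 0
  | node _ l r, o, c, x =>
    if x < o + l.numNodes then l.preorderLabel o (c + 1) x
    else if x = o + l.numNodes then c
    else r.preorderLabel (o + l.numNodes + 1) (c + l.numNodes + 1) x

theorem preorderLabel_mem_Ico (t : BinaryTree β) {o c x : ℕ} (hox : o ≤ x)
    (hx : x < o + t.numNodes) :
    t.preorderLabel o c x ∈ Set.Ico c (c + t.numNodes) := by
  induction t generalizing o c with
  | nil => simp only [numNodes] at hx; omega
  | node _ l r ihl ihr =>
    simp only [numNodes] at hx ⊢
    rw [preorderLabel]
    split_ifs with hl hroot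
    · have := ihl (c := c + 1) hox hl
      rw [Set.mem_Ico] at this ⊢; omega
    · rw [Set.mem_Ico]; omega
    · have := ihr (c := c + l.numNodes + 1) (o := o + l.numNodes + 1) (by omega) (by omega)
      rw [Set.mem_Ico] at this ⊢; omega

theorem injOn_preorderLabel (t : BinaryTree β) (o c : ℕ) :
    Set.InjOn (t.preorderLabel o c) (Set.Ico o (o + t.numNodes)) := by
  induction t generalizing o c with
  | nil => simp [numNodes]
  | node _ l r ihl ihr =>
    rintro x ⟨hx₁, hx₂⟩ y ⟨hy₁, hy₂⟩ hxy
    simp only [numNodes] at hx₂ hy₂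
    have hlx := l.preorderLabel_mem_Ico (c := c + 1) (x := x) hx₁
    have hly := l.preorderLabel_mem_Ico (c := c + 1) (x := y) hy₁
    have hrx := r.preorderLabel_mem_Ico (c := c + l.numNodes + 1) (o := o + l.numNodes + 1)
      (x := x)
    have hry := r.preorderLabel_mem_Ico (c := c + l.numNodes + 1) (o := o + l.numNodes + 1)
      (x := y)
    simp only [preorderLabel, Set.mem_Ico] at hxy hlx hly hrx hry
    split_ifs at hxy
    all_goals first
      | omega
      | exact ihl o (c + 1) ⟨hx₁, by omega⟩ ⟨hy₁, by omega⟩ hxy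
      | exact ihr _ _ ⟨by omega, by omega⟩ ⟨by omega, by omega⟩ hxy

theorem isCartesian_preorderLabel (t : BinaryTree β) (o c : ℕ) :
    IsCartesian (t.preorderLabel o c) o t := by
  induction t generalizing o c with
  | nil => trivial
  | node v l r ihl ihr =>
    refine ⟨fun x hx₁ hx₂ => ?_, (ihl o (c + 1)).of_le_imp fun x y _ hx _ hy hxy => ?_,
      (ihr _ (c + l.numNodes + 1)).of_le_imp fun x y hx _ hy _ hxy => ?_⟩
    · have := (node v l r).preorderLabel_mem_Ico (c := c) hx₁ (by simp only [numNodes]; omega)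
      simp only [preorderLabel, lt_irrefl, if_false, if_true] at this ⊢
      exact this.1
    · simpa [preorderLabel, hx, hy] using hxy
    · have hx' : ¬x < o + l.numNodes := by omega
      have hy' : ¬y < o + l.numNodes := by omega
      have hx'' : x ≠ o + l.numNodes := by omega
      have hy'' : y ≠ o + l.numNodes := by omega
      simpa only [preorderLabel, hx', hy', hx'', hy'', if_false] using hxy

def rmqFun (n : ℕ) (t : BinaryTree β) (i j : Fin n) (h : i ≤ j) : Fin n :=
  ⟨t.rmq 0 i j, (t.rmq_mem_Icc 0 h).2.trans_lt j.2⟩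

theorem IsCartesian.isArgmin_rmqFun [LinearOrder α] {A : ℕ → α} {n : ℕ} {t : BinaryTree β}
    (h : IsCartesian A 0 t) (ht : t.numNodes = n) (i j : Fin n) (hij : i ≤ j) :
    isArgmin (fun k : Fin n => A k) i j (t.rmqFun n i j hij) :=
  ⟨(t.rmq_mem_Icc 0 hij).1, (t.rmq_mem_Icc 0 hij).2, fun m him hmj =>
    h.rmq_le (Nat.zero_le _) him hmj (by omega)⟩

theorem injOn_rmqFun (n : ℕ) : Set.InjOn (rmqFun n) {t : BinaryTree Unit | t.numNodes = n} :=
  fun t₁ (h₁ : t₁.numNodes = n) t₂ (h₂ : t₂.numNodes = n) he =>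
    eq_of_rmq_eq 0 (h₁.trans h₂.symm) fun i j _ hij hj =>
      congrArg Fin.val (congrFun₃ he ⟨i, by omega⟩ ⟨j, by omega⟩ hij)

end BinaryTree

open BinaryTree

theorem isArgmin_unique {α : Type*} [LinearOrder α] {n : ℕ} {A : Fin n → α}
    (hA : Function.Injective A) {i j k k' : Fin n} (hk : isArgmin A i j k)
    (hk' : isArgmin A i j k') : k = k' :=
  hA (le_antisymm (hk.2.2 k' hk'.1 hk'.2.1) (hk'.2.2 k hk.1 hk.2.1))

theorem setOf_isArgmin_eq_image_rmqFun (n : ℕ) :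
    { f : ∀ i j : Fin n, i ≤ j → Fin n |
      ∃ A : Fin n → ℝ, Function.Injective A ∧ ∀ i j (h : i ≤ j), isArgmin A i j (f i j h) } =
      rmqFun n '' {t : BinaryTree Unit | t.numNodes = n} := by
  ext f
  constructor
  · rintro ⟨A, hA, hf⟩
    obtain ⟨t, ht, hc⟩ := exists_isCartesian (Function.extend Fin.val A 0) 0 n
    refine ⟨t, ht, ?_⟩
    funext i j hij
    refine isArgmin_unique hA ?_ (hf i j hij)
    simpa [Fin.val_injective.extend_apply] using hc.isArgmin_rmqFun ht i j hij
  · rintro ⟨t, ht : t.numNodes = n, rfl⟩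
    refine ⟨fun k => (t.preorderLabel 0 0 k : ℝ), fun x y hxy => Fin.ext ?_,
      ((t.isCartesian_preorderLabel 0 0).of_le_imp fun _ _ _ _ _ _ h =>
        Nat.cast_le.mpr h).isArgmin_rmqFun ht⟩
    exact t.injOn_preorderLabel 0 0 ⟨Nat.zero_le _, by omega⟩ ⟨Nat.zero_le _, by omega⟩
      (Nat.cast_injective hxy)

/-- The number of equivalence classes of length-`n` arrays of distinct values under
"same answer to every range minimum query" equals the `n`-th Catalan number. -/
theorem stmt2 (n : ℕ) :
    Set.ncard { f : ∀ i j : Fin n, i ≤ j → Fin n |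
        ∃ A : Fin n → ℝ, Function.Injective A ∧
          ∀ i j (h : i ≤ j), isArgmin A i j (f i j h) }
      = catalan n := by
  rw [setOf_isArgmin_eq_image_rmqFun, (injOn_rmqFun n).ncard_image,
    ← treesOfNumNodesEq_card_eq_catalan, ← Set.ncard_coe_finset]
  congr 1
  ext t
  simp
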